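/- For every q ≥ 0, the steady-state degree distribution of the DMS model exists: the limit P(q) := lim_{t→∞} P(q,t) exists and is given by P(q) = ((m+A)/m) · (Γ(A + A/m + 1)/Γ(A)) · Γ(q+A)/Γ(q + A + 2 + A/m), where Γ denotes the Gamma function. -/

import Mathlib

open Finset Filter Topology

/-!
Summing the recurrence over the vertices, the expected number `N q t = ∑ i, P q i t` of vertices
of degree `q` obeys `N q (t + 1) = (1 - y / t) ^ m * N q t + r t` with `y = (q + A) / (m + A)`.
A sequence with `u (t + 1) = a t * u t + r t`, `t * (1 - a t) → α` and `r t → β` grows like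
`β / (1 + α) * t`. By induction on `q`, `r t` converges, and in its limit only single-edge jumps
from degree `q - 1` survive, so the limits `ℓ q` of `N q t / t` satisfy
`ℓ 0 * (1 + m * A / (m + A)) = 1` and
`ℓ q * (1 + m * y) = m * (q - 1 + A) / (m + A) * ℓ (q - 1)` for `q ≥ 1`: a first-order
recursion, solved by the Gamma-function formula.
-/

theorem tendsto_div_natCast_zero_of_abs_succ_le {w e : ℕ → ℝ} (he : Tendsto e atTop (𝓝 0))
    (hw : ∀ᶠ t in atTop, |w (t + 1)| ≤ |w t| + |e t|) :
    Tendsto (fun t : ℕ => w t / t) atTop (𝓝 0) := by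
  obtain ⟨T, hT⟩ := eventually_atTop.1 hw
  have hbound : ∀ t, T ≤ t → |w t| ≤ |w T| + ∑ s ∈ range t, |e s| := by
    intro t ht
    induction t, ht using Nat.le_induction with
    | base => simpa using sum_nonneg fun s _ => abs_nonneg (e s)
    | succ t ht ih =>
      rw [sum_range_succ]
      linarith [hT t ht]
  have hmajorant : Tendsto (fun t : ℕ => |w T| / t + (t : ℝ)⁻¹ * ∑ s ∈ range t, |e s|)
      atTop (𝓝 0) := by
    simpa using (tendsto_const_div_atTop_nhds_zero_nat |w T|).add he.abs.cesaro
  refine squeeze_zero_norm' ?_ hmajorant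
  filter_upwards [eventually_ge_atTop T] with t ht
  calc ‖w t / t‖ = |w t| / t := by rw [Real.norm_eq_abs, abs_div, Nat.abs_cast]
    _ ≤ (|w T| + ∑ s ∈ range t, |e s|) / t := by gcongr; exact hbound t ht
    _ = _ := by ring

theorem tendsto_div_natCast_of_succ_eq_mul_add {u a r : ℕ → ℝ} {α β : ℝ}
    (hrec : ∀ᶠ t in atTop, u (t + 1) = a t * u t + r t)
    (ha_le : ∀ᶠ t in atTop, |a t| ≤ 1)
    (ha : Tendsto (fun t : ℕ => t * (1 - a t)) atTop (𝓝 α))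
    (hr : Tendsto r atTop (𝓝 β)) :
    Tendsto (fun t : ℕ => u t / t) atTop (𝓝 (β / (1 + α))) := by
  have hα : 0 ≤ α := ge_of_tendsto ha <| ha_le.mono fun t ht =>
    mul_nonneg t.cast_nonneg (sub_nonneg.2 (le_of_abs_le ht))
  set L := β / (1 + α) with hL
  -- `u t - L t` satisfies the same recurrence with `r t` replaced by `e t`, and `e t → 0`.
  set e : ℕ → ℝ := fun t => r t - L - L * (t * (1 - a t))
  have he : Tendsto e atTop (𝓝 0) := by
    have hβ : β - L - L * α = 0 := by rw [hL]; field_simp; ring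
    simpa [hβ] using (hr.sub_const L).sub (ha.const_mul L)
  have hw : Tendsto (fun t : ℕ => (u t - L * t) / t) atTop (𝓝 0) := by
    refine tendsto_div_natCast_zero_of_abs_succ_le he ?_
    filter_upwards [hrec, ha_le] with t hu hat
    have hw_succ : u (t + 1) - L * (t + 1 : ℕ) = a t * (u t - L * t) + e t := by
      rw [hu]; push_cast; ring
    calc |u (t + 1) - L * (t + 1 : ℕ)| ≤ |a t| * |u t - L * t| + |e t| := by
          rw [hw_succ, ← abs_mul]; exact abs_add_le _ _
      _ ≤ |u t - L * t| + |e t| := by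
          gcongr; exact mul_le_of_le_one_left (abs_nonneg _) hat
  refine (zero_add L ▸ hw.add_const L).congr' ?_
  filter_upwards [eventually_ne_atTop 0] with t ht
  field_simp
  ring

theorem tendsto_natCast_mul_one_sub_one_sub_div_pow (y : ℝ) (m : ℕ) :
    Tendsto (fun t : ℕ => t * (1 - (1 - y / t) ^ m)) atTop (𝓝 (m * y)) := by
  have hx : Tendsto (fun t : ℕ => 1 - y / t) atTop (𝓝 1) := by
    simpa using tendsto_const_nhds.sub (tendsto_const_div_atTop_nhds_zero_nat y)
  have hgeom : Tendsto (fun t : ℕ => y * ∑ i ∈ range m, (1 - y / t) ^ i) atTop (𝓝 (m * y)) := by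
    simpa [mul_comm] using (tendsto_finsetSum (range m) fun i _ => hx.pow i).const_mul y
  refine hgeom.congr' ?_
  filter_upwards [eventually_ne_atTop 0] with t ht
  rw [← mul_neg_geom_sum]
  field_simp
  ring

theorem tendsto_div_pow_mul_one_sub_div_pow_mul {f : ℕ → ℝ} {ℓ : ℝ}
    (hf : Tendsto (fun t : ℕ => f t / t) atTop (𝓝 ℓ)) (c : ℝ) {j : ℕ} (hj : j ≠ 0) (k : ℕ) :
    Tendsto (fun t : ℕ => (c / t) ^ j * (1 - c / t) ^ k * f t) atTop
      (𝓝 (c * ℓ * 0 ^ (j - 1))) := by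
  have hc : Tendsto (fun t : ℕ => c / t) atTop (𝓝 0) := tendsto_const_div_atTop_nhds_zero_nat c
  have hlim := ((hc.pow (j - 1)).mul (((tendsto_const_nhds (x := (1 : ℝ))).sub hc).pow k)).mul
    (hf.const_mul c)
  rw [sub_zero, one_pow, mul_one, mul_comm] at hlim
  refine hlim.congr' ?_
  filter_upwards [eventually_ne_atTop 0] with t ht
  obtain ⟨i, rfl⟩ := Nat.exists_eq_succ_of_ne_zero hj
  simp only [Nat.succ_sub_one, pow_succ]
  field_simp

-- The probability that a vertex of degree `q - j` receives `j` of the `m` edges added at time `t`.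
noncomputable def dmsTransition (m : ℕ) (A : ℝ) (q j t : ℕ) : ℝ :=
  (m.choose j : ℝ) * (((q : ℝ) - (j : ℝ) + A) / ((m + A) * t)) ^ j *
    (1 - ((q : ℝ) - (j : ℝ) + A) / ((m + A) * t)) ^ (m - j)

noncomputable def dmsSteadyState (m : ℕ) (A : ℝ) (q : ℕ) : ℝ :=
  (((m : ℝ) + A) / (m : ℝ)) * (Real.Gamma (A + A / (m : ℝ) + 1) / Real.Gamma A) *
    (Real.Gamma ((q : ℝ) + A) / Real.Gamma ((q : ℝ) + A + 2 + A / (m : ℝ)))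

section DMS

variable {m : ℕ} {A : ℝ}

theorem dmsTransition_zero_right (q t : ℕ) :
    dmsTransition m A q 0 t = (1 - ((q + A) / (m + A)) / t) ^ m := by
  simp [dmsTransition, div_div]

theorem tendsto_dmsTransition_mul {f : ℕ → ℝ} {ℓ : ℝ}
    (hf : Tendsto (fun t : ℕ => f t / t) atTop (𝓝 ℓ)) (q : ℕ) {j : ℕ} (hj : j ≠ 0) :
    Tendsto (fun t : ℕ => dmsTransition m A q j t * f t) atTop
      (𝓝 (m.choose j * (((q : ℝ) - j + A) / (m + A) * ℓ * 0 ^ (j - 1)))) := by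
  simpa only [dmsTransition, mul_assoc, ← div_div] using
    (tendsto_div_pow_mul_one_sub_div_pow_mul hf (((q : ℝ) - j + A) / (m + A)) hj (m - j)).const_mul
      (m.choose j : ℝ)

theorem dmsSteadyState_zero (hm : 1 ≤ m) (hA : 0 < A) :
    dmsSteadyState m A 0 * (A + A / m + 1) = (m + A) / m := by
  have hx : 0 < A + A / m + 1 := by positivity
  have hΓ : Real.Gamma (A + 2 + A / m) = (A + A / m + 1) * Real.Gamma (A + A / m + 1) := by
    rw [← Real.Gamma_add_one hx.ne']; ring_nf
  rw [dmsSteadyState, Nat.cast_zero, zero_add, hΓ]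
  field_simp [(Real.Gamma_pos_of_pos hA).ne', (Real.Gamma_pos_of_pos hx).ne']

theorem dmsSteadyState_succ (hA : 0 < A) (q : ℕ) :
    dmsSteadyState m A (q + 1) * (q + A + 2 + A / m) = (q + A) * dmsSteadyState m A q := by
  have hx : 0 < (q : ℝ) + A := by positivity
  have hy : 0 < (q : ℝ) + A + 2 + A / m := by positivity
  have hΓx : Real.Gamma (((q + 1 : ℕ) : ℝ) + A) = (q + A) * Real.Gamma (q + A) := by
    rw [← Real.Gamma_add_one hx.ne']; push_cast; ring_nf
  have hΓy : Real.Gamma (((q + 1 : ℕ) : ℝ) + A + 2 + A / m) =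
      (q + A + 2 + A / m) * Real.Gamma (q + A + 2 + A / m) := by
    rw [← Real.Gamma_add_one hy.ne']; push_cast; ring_nf
  rw [dmsSteadyState, dmsSteadyState, hΓx, hΓy]
  field_simp [(Real.Gamma_pos_of_pos hy).ne']

theorem dmsSteadyState_stationary (hm : 1 ≤ m) (hA : 0 < A) (q : ℕ) :
    dmsSteadyState m A q * (1 + m * ((q + A) / (m + A))) =
      (if q = 0 then 1 else 0) + ∑ j ∈ Ioc 0 (min m q),
        m.choose j * (((q : ℝ) - j + A) / (m + A) * dmsSteadyState m A (q - j) * 0 ^ (j - 1)) := by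
  have hm0 : (0 : ℝ) < m := by exact_mod_cast hm
  have hmA : (0 : ℝ) < m + A := by positivity
  cases q with
  | zero =>
    have h := dmsSteadyState_zero hm hA
    simp only [Nat.cast_zero, zero_add, _root_.min_zero, Ioc_self, sum_empty, if_true, add_zero]
    field_simp at h ⊢
    linear_combination h
  | succ q =>
    have h := dmsSteadyState_succ (m := m) hA q
    have h1 : (1 : ℕ) ∈ Ioc 0 (min m (q + 1)) := by rw [mem_Ioc, le_min_iff]; omega
    rw [sum_eq_single_of_mem 1 h1 fun j hj hj1 => by
      rw [zero_pow (by rw [mem_Ioc, le_min_iff] at hj; omega), mul_zero, mul_zero]]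
    simp only [Nat.add_one_ne_zero, if_false, zero_add, Nat.choose_one_right, Nat.sub_self,
      pow_zero, mul_one, add_tsub_cancel_right]
    push_cast
    field_simp at h ⊢
    linear_combination h

theorem tendsto_dms_div_natCast (hm : 1 ≤ m) (hA : 0 < A) {N : ℕ → ℕ → ℝ}
    (hN : ∀ q t : ℕ, 1 ≤ t → N q (t + 1) =
      (if q = 0 then 1 else 0) + ∑ j ∈ Icc 0 (min m q), dmsTransition m A q j t * N (q - j) t)
    (q : ℕ) : Tendsto (fun t : ℕ => N q t / t) atTop (𝓝 (dmsSteadyState m A q)) := by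
  induction q using Nat.strong_induction_on with
  | _ q ih =>
  have hy : 0 ≤ ((q : ℝ) + A) / (m + A) := by positivity
  set y : ℝ := ((q : ℝ) + A) / (m + A)
  have hrec : ∀ᶠ t in atTop, N q (t + 1) = (1 - y / t) ^ m * N q t +
      ((if q = 0 then 1 else 0) +
        ∑ j ∈ Ioc 0 (min m q), dmsTransition m A q j t * N (q - j) t) := by
    filter_upwards [eventually_ge_atTop 1] with t ht
    rw [hN q t ht, ← add_sum_Ioc_eq_sum_Icc (Nat.zero_le _), dmsTransition_zero_right,
      Nat.sub_zero]
    ring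
  have ha_le : ∀ᶠ t : ℕ in atTop, |(1 - y / t) ^ m| ≤ 1 := by
    filter_upwards [tendsto_natCast_atTop_atTop.eventually_ge_atTop y] with t ht
    have hyt : y / t ≤ 1 := div_le_one_of_le₀ ht t.cast_nonneg
    have hyt0 : 0 ≤ y / t := by positivity
    rw [abs_pow]
    exact pow_le_one₀ (abs_nonneg _) (abs_le.2 ⟨by linarith, by linarith⟩)
  have hr := (tendsto_const_nhds (x := if q = 0 then (1 : ℝ) else 0)).add <|
    tendsto_finsetSum (Ioc 0 (min m q)) fun j hj =>
      tendsto_dmsTransition_mul (m := m) (A := A) (j := j)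
        (ih (q - j) (by rw [mem_Ioc, le_min_iff] at hj; omega)) q (by rw [mem_Ioc] at hj; omega)
  have hlim := tendsto_div_natCast_of_succ_eq_mul_add hrec ha_le
    (tendsto_natCast_mul_one_sub_one_sub_div_pow y m) hr
  rwa [← dmsSteadyState_stationary hm hA, mul_div_cancel_right₀ _ (by positivity)] at hlim

theorem dms_count_succ {P : ℕ → ℕ → ℕ → ℝ}
    (hPii : ∀ q i : ℕ, 2 ≤ i → P q i i = if q = 0 then 1 else 0)
    (hPrec : ∀ q i t : ℕ, 1 ≤ i → i ≤ t →
      P q i (t + 1) = ∑ j ∈ Icc 0 (min m q), dmsTransition m A q j t * P (q - j) i t)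
    (q t : ℕ) (ht : 1 ≤ t) :
    ∑ i ∈ Icc 1 (t + 1), P q i (t + 1) = (if q = 0 then 1 else 0) +
      ∑ j ∈ Icc 0 (min m q), dmsTransition m A q j t * ∑ i ∈ Icc 1 t, P (q - j) i t := by
  rw [sum_Icc_succ_top (by omega), hPii q (t + 1) (by omega), add_comm]
  simp only [mul_sum]
  rw [sum_comm]
  exact congrArg _ (sum_congr rfl fun i hi => hPrec q i t (mem_Icc.1 hi).1 (mem_Icc.1 hi).2)

end DMS

theorem dms_steady_state_distribution_general
    (m : ℕ) (hm : 1 ≤ m) (A : ℝ) (hA : 0 < A)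
    (P : ℕ → ℕ → ℕ → ℝ)
    (hPii : ∀ q i : ℕ, 2 ≤ i → P q i i = if q = 0 then 1 else 0)
    (hPrec : ∀ q i t : ℕ, 1 ≤ i → i ≤ t →
      P q i (t + 1) = ∑ j ∈ Finset.Icc 0 (min m q),
        (m.choose j : ℝ) * (((q : ℝ) - (j : ℝ) + A) / ((m + A) * t)) ^ j *
          (1 - ((q : ℝ) - (j : ℝ) + A) / ((m + A) * t)) ^ (m - j) * P (q - j) i t)
    (Pnet : ℕ → ℕ → ℝ)
    (hPnet : ∀ q t : ℕ, 1 ≤ t →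
      Pnet q t = (1 / (t : ℝ)) * ∑ i ∈ Finset.Icc 1 t, P q i t) :
    ∀ q : ℕ,
      Filter.Tendsto (fun t : ℕ => Pnet q t) Filter.atTop
        (nhds ((((m : ℝ) + A) / (m : ℝ)) *
          (Real.Gamma (A + A / (m : ℝ) + 1) / Real.Gamma A) *
          (Real.Gamma ((q : ℝ) + A) / Real.Gamma ((q : ℝ) + A + 2 + A / (m : ℝ))))) := by
  intro q
  have hcount := tendsto_dms_div_natCast hm hA (N := fun q t => ∑ i ∈ Icc 1 t, P q i t)
    (dms_count_succ hPii hPrec) q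
  refine hcount.congr' ?_
  filter_upwards [eventually_ge_atTop 1] with t ht
  rw [hPnet q t ht, one_div, inv_mul_eq_div]

/-- existence and Gamma-function formula for the steady-state degree
distribution of the DMS model. -/
theorem dms_steady_state_distribution
    (m : ℕ) (hm : 1 ≤ m) (A : ℝ) (hA : 0 < A)
    (P : ℕ → ℕ → ℕ → ℝ)
    (hP11 : ∀ q : ℕ, P q 1 1 = if q = m then 1 else 0)
    (hPii : ∀ q i : ℕ, 2 ≤ i → P q i i = if q = 0 then 1 else 0)
    (hPrec : ∀ q i t : ℕ, 1 ≤ i → i ≤ t →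
      P q i (t + 1) = ∑ j ∈ Finset.Icc 0 (min m q),
        (m.choose j : ℝ) * (((q : ℝ) - (j : ℝ) + A) / ((m + A) * t)) ^ j *
          (1 - ((q : ℝ) - (j : ℝ) + A) / ((m + A) * t)) ^ (m - j) * P (q - j) i t)
    (Pnet : ℕ → ℕ → ℝ)
    (hPnet : ∀ q t : ℕ, 1 ≤ t →
      Pnet q t = (1 / (t : ℝ)) * ∑ i ∈ Finset.Icc 1 t, P q i t) :
    ∀ q : ℕ,
      Filter.Tendsto (fun t : ℕ => Pnet q t) Filter.atTop
        (nhds ((((m : ℝ) + A) / (m : ℝ)) *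
          (Real.Gamma (A + A / (m : ℝ) + 1) / Real.Gamma A) *
          (Real.Gamma ((q : ℝ) + A) / Real.Gamma ((q : ℝ) + A + 2 + A / (m : ℝ))))) :=
  dms_steady_state_distribution_general m hm A hA P hPii hPrec Pnet hPnet
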